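/- Let (A,B,C,E) be the CCF of a minimal encoder G of an (n,k,δ) convolutional code C, and set Δ = {(X,Y) ∈ F^δ × F^δ : Y = XA + uB for some u ∈ F^k}, C_const = C ∩ F^n, and Ω = {(X,Y) ∈ Δ : XC + Y B^T E ∈ C_const}. Then the projection Π₁: F^δ × F^δ → F^δ onto the first component, (X,Y) ↦ X, is injective when restricted to Ω. -/

import Mathlib

open Polynomial Matrix
open scoped Classical

noncomputable section

namespace ConvCode

variable (F : Type) [Field F] [Fintype F]

/-- Hamming weight of a vector. -/
def wt {n : ℕ} (a : Fin n → F) : ℕ := (Finset.univ.filter fun j => a j ≠ 0).card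

/-- Weight enumerator of a set of vectors in `F^n`, as a polynomial in `ℂ[W]`. -/
def weSet {n : ℕ} (S : Set (Fin n → F)) : Polynomial ℂ :=
  ∑ a ∈ (Set.toFinite S).toFinset, (Polynomial.X : Polynomial ℂ) ^ wt F a

/-- The `i`-th row degree of a polynomial matrix. -/
def rowDeg {k n : ℕ} (G : Matrix (Fin k) (Fin n) (Polynomial F)) (i : Fin k) : ℕ :=
  Finset.univ.sup fun j => (G i j).natDegree

/-- `G` is basic: it has a polynomial right inverse. -/
def IsBasic {k n : ℕ} (G : Matrix (Fin k) (Fin n) (Polynomial F)) : Prop :=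
  ∃ H : Matrix (Fin n) (Fin k) (Polynomial F), G * H = 1

/-- The degree of the code: maximal degree of the `k × k` minors of `G`. -/
def codeDeg {k n : ℕ} (G : Matrix (Fin k) (Fin n) (Polynomial F)) : ℕ :=
  Finset.univ.sup fun f : Fin k ↪ Fin n => ((G.submatrix id f).det).natDegree

/-- A minimal (basic) encoder: the sum of the row degrees equals the degree of the code. -/
def IsMinimalEncoder {k n : ℕ} (G : Matrix (Fin k) (Fin n) (Polynomial F)) : Prop :=
  IsBasic F G ∧ ∑ i, rowDeg F G i = codeDeg F G

/-- The convolutional code generated by the encoder `G`. -/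
def code {k n : ℕ} (G : Matrix (Fin k) (Fin n) (Polynomial F)) : Set (Fin n → Polynomial F) :=
  Set.range fun u : Fin k → Polynomial F => u ᵥ* G

/-- The (module-theoretic) dual of a convolutional code. -/
def dualCode {n : ℕ} (𝓒 : Set (Fin n → Polynomial F)) : Set (Fin n → Polynomial F) :=
  {w | ∀ v ∈ 𝓒, w ⬝ᵥ v = 0}

/-- The sequence-space pairing `⟨⟨v,w⟩⟩ = ∑_t v_t w_tᵀ`. -/
def seqPair {n : ℕ} (v w : Fin n → Polynomial F) : F :=
  ∑ j, ∑ t ∈ Finset.range ((v j).natDegree + 1), (v j).coeff t * (w j).coeff t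

/-- The sequence space dual of a convolutional code. -/
def seqDual {n : ℕ} (𝓒 : Set (Fin n → Polynomial F)) : Set (Fin n → Polynomial F) :=
  {w | ∀ v ∈ 𝓒, ∀ l : ℕ, seqPair F v (fun j => Polynomial.X ^ l * w j) = 0}

/-- Index set of the state space of the controller canonical form:
a state index is a pair `(i, ν)` with `i` a row index and `ν < δ_i`. -/
abbrev StateIdx (k : ℕ) (d : Fin k → ℕ) : Type := (i : Fin k) × Fin (d i)

/-- The state-transition matrix `A` of the controller canonical form. -/
def ccfA {k : ℕ} (d : Fin k → ℕ) : Matrix (StateIdx k d) (StateIdx k d) F :=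
  Matrix.of fun s t => if s.1 = t.1 ∧ (s.2 : ℕ) + 1 = (t.2 : ℕ) then 1 else 0

/-- The input-to-state matrix `B` of the controller canonical form. -/
def ccfB {k : ℕ} (d : Fin k → ℕ) : Matrix (Fin k) (StateIdx k d) F :=
  Matrix.of fun i t => if t.1 = i ∧ (t.2 : ℕ) = 0 then 1 else 0

/-- The state-to-output matrix `C` of the controller canonical form. -/
def ccfC {k n : ℕ} (d : Fin k → ℕ) (G : Matrix (Fin k) (Fin n) (Polynomial F)) :
    Matrix (StateIdx k d) (Fin n) F :=
  Matrix.of fun s j => (G s.1 j).coeff ((s.2 : ℕ) + 1)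

/-- The matrix `E = G(0)` of the controller canonical form. -/
def ccfE {k n : ℕ} (G : Matrix (Fin k) (Fin n) (Polynomial F)) : Matrix (Fin k) (Fin n) F :=
  Matrix.of fun i j => (G i j).coeff 0

/-- The state index set of the controller canonical form of `G`. -/
abbrev States {k n : ℕ} (G : Matrix (Fin k) (Fin n) (Polynomial F)) : Type :=
  StateIdx k (rowDeg F G)

def matA {k n : ℕ} (G : Matrix (Fin k) (Fin n) (Polynomial F)) :
    Matrix (States F G) (States F G) F := ccfA F (rowDeg F G)

def matB {k n : ℕ} (G : Matrix (Fin k) (Fin n) (Polynomial F)) :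
    Matrix (Fin k) (States F G) F := ccfB F (rowDeg F G)

def matC {k n : ℕ} (G : Matrix (Fin k) (Fin n) (Polynomial F)) :
    Matrix (States F G) (Fin n) F := ccfC F (rowDeg F G) G

def matE {k n : ℕ} (G : Matrix (Fin k) (Fin n) (Polynomial F)) :
    Matrix (Fin k) (Fin n) F := ccfE F G

/-- The weight adjacency matrix of a state space realization `(A,B,C,E)`. -/
def WAM {σ : Type} [Fintype σ] {k n : ℕ} (A : Matrix σ σ F) (B : Matrix (Fin k) σ F)
    (C : Matrix σ (Fin n) F) (E : Matrix (Fin k) (Fin n) F) :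
    Matrix (σ → F) (σ → F) (Polynomial ℂ) :=
  Matrix.of fun X Y =>
    weSet F {v | ∃ u : Fin k → F, Y = X ᵥ* A + u ᵥ* B ∧ v = X ᵥ* C + u ᵥ* E}

/-- The weight adjacency matrix of an encoder `G` (via its controller canonical form). -/
def wam {k n : ℕ} (G : Matrix (Fin k) (Fin n) (Polynomial F)) :
    Matrix (States F G → F) (States F G → F) (Polynomial ℂ) :=
  WAM F (matA F G) (matB F G) (matC F G) (matE F G)

/-- The block code `C_const = 𝓒 ∩ F^n` of constant codewords. -/
def constSet {k n : ℕ} (G : Matrix (Fin k) (Fin n) (Polynomial F)) : Set (Fin n → F) :=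
  {w | (fun j => Polynomial.C (w j)) ∈ code F G}

/-- The block code `C_coeff` of coefficient vectors of codewords. -/
def coeffSet {k n : ℕ} (G : Matrix (Fin k) (Fin n) (Polynomial F)) : Set (Fin n → F) :=
  {w | ∃ v ∈ code F G, ∃ t : ℕ, ∀ j, (v j).coeff t = w j}

/-- The dual of a block code. -/
def blockDual {n : ℕ} (S : Set (Fin n → F)) : Set (Fin n → F) :=
  {w | ∀ v ∈ S, w ⬝ᵥ v = 0}

/-- `Δ`: the set of state pairs `(X,Y)` admitting a transition `Y = XA + uB`. -/
def Delta {k n : ℕ} (G : Matrix (Fin k) (Fin n) (Polynomial F)) :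
    Set ((States F G → F) × (States F G → F)) :=
  {p | ∃ u : Fin k → F, p.2 = p.1 ᵥ* matA F G + u ᵥ* matB F G}

/-- `Δ⁻ = {(0,Y) : Y ∈ im A}`. -/
def DeltaMinus {k n : ℕ} (G : Matrix (Fin k) (Fin n) (Polynomial F)) :
    Set ((States F G → F) × (States F G → F)) :=
  {p | p.1 = 0 ∧ ∃ X : States F G → F, p.2 = X ᵥ* matA F G}

/-- `Ω = {(X,Y) ∈ Δ : XC + Y Bᵀ E ∈ C_const}`. -/
def Omega {k n : ℕ} (G : Matrix (Fin k) (Fin n) (Polynomial F)) :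
    Set ((States F G → F) × (States F G → F)) :=
  {p | p ∈ Delta F G ∧
    p.1 ᵥ* matC F G + (p.2 ᵥ* (matB F G)ᵀ) ᵥ* matE F G ∈ constSet F G}

/-- Orthogonal of a set of state pairs with respect to the standard bilinear form on `F^{2δ}`. -/
def pairPerp {σ : Type} [Fintype σ] (S : Set ((σ → F) × (σ → F))) :
    Set ((σ → F) × (σ → F)) :=
  {p | ∀ s ∈ S, p.1 ⬝ᵥ s.1 + p.2 ⬝ᵥ s.2 = 0}

/-- `S_0 = Bᵀ E` and `S_i = Bᵀ B A^{i-1} C` for `i ≥ 1`. -/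
def Smat {k n : ℕ} (d : Fin k → ℕ) (G : Matrix (Fin k) (Fin n) (Polynomial F)) :
    ℕ → Matrix (StateIdx k d) (Fin n) F
  | 0 => (ccfB F d)ᵀ * ccfE F G
  | (i + 1) => (ccfB F d)ᵀ * ccfB F d * ccfA F d ^ i * ccfC F d G

def Sm {k n : ℕ} (G : Matrix (Fin k) (Fin n) (Polynomial F)) :
    ℕ → Matrix (States F G) (Fin n) F := Smat F (rowDeg F G) G

/-- The matrix `N = ∑_{m≥2} ∑_{i=1}^{m-1} ∑_{j=0}^{i-1} (Âᵀ)^{i-1} Ŝ_j S_{m-j}ᵀ A^{m-(i+1)}`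
(all summands with `m ≥ δ + δ̂` vanish, so the sum is truncated there). -/
def Nm {k kb n : ℕ} (G : Matrix (Fin k) (Fin n) (Polynomial F))
    (Gh : Matrix (Fin kb) (Fin n) (Polynomial F)) :
    Matrix (States F Gh) (States F G) F :=
  ∑ m ∈ Finset.Icc 2 (Fintype.card (States F G) + Fintype.card (States F Gh)),
    ∑ i ∈ Finset.Icc 1 (m - 1), ∑ j ∈ Finset.range i,
      (matA F Gh)ᵀ ^ (i - 1) * Sm F Gh j * (Sm F G (m - j))ᵀ * matA F G ^ (m - (i + 1))

/-- The reciprocal matrix `G' = diag(D^{δ_1},…,D^{δ_k}) · G(D⁻¹)`. -/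
def recip {k n : ℕ} (G : Matrix (Fin k) (Fin n) (Polynomial F)) :
    Matrix (Fin k) (Fin n) (Polynomial F) :=
  Matrix.of fun i j => (G i j).reflect (rowDeg F G i)

/-- The block diagonal matrix `R` whose blocks are the anti-identity matrices. -/
def Rmat {k : ℕ} (d : Fin k → ℕ) : Matrix (StateIdx k d) (StateIdx k d) F :=
  Matrix.of fun s t => if s.1 = t.1 ∧ (s.2 : ℕ) + (t.2 : ℕ) + 1 = d s.1 then 1 else 0

/-- The MacWilliams matrix `𝓗 = q^{-δ/2} (ζ^{τ(X Yᵀ)})_{X,Y}`. -/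
def macH (σ : Type) [Fintype σ] (p : ℕ) [Algebra (ZMod p) F] (ζ : ℂ) :
    Matrix (σ → F) (σ → F) ℂ :=
  Matrix.of fun X Y =>
    (((Real.sqrt (Fintype.card F) : ℝ) : ℂ))⁻¹ ^ Fintype.card σ *
      ζ ^ (Algebra.trace (ZMod p) F (X ⬝ᵥ Y)).val

/-- The MacWilliams transform `H(f)(W) = (1+(q-1)W)^n f((1-W)/(1+(q-1)W))`
on polynomials of degree at most `n`. -/
def macWT (q n : ℕ) (f : Polynomial ℂ) : Polynomial ℂ :=
  ∑ j ∈ Finset.range (n + 1),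
    Polynomial.C (f.coeff j) * (1 - Polynomial.X) ^ j *
      (1 + Polynomial.C ((q : ℂ) - 1) * Polynomial.X) ^ (n - j)

end ConvCode

/-!
If `(X, Y)` and `(X, Y')` both lie in `Ω`, then `Y - Y' = z B` with `z = (Y - Y') Bᵀ`, and
`z E ∈ C_const`. Write `z E = v G` with `v ∈ F[D]^k`. By the predictable degree property of
a minimal encoder, `v_i = 0` whenever `δ_i > 0`; since `E = G(0)` has a right inverse
(`G` is basic), `z = v(0)`. Hence `z` vanishes on the rows with `δ_i > 0`, the only rows
that `B` sees, so `Y = Y'`.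

The predictable degree property rests on the leading row coefficient matrix `[G]_hr` having
full row rank: its maximal minors are the coefficients of `D^δ` in the `k × k` minors of `G`,
and minimality says that one of these minors has degree `δ = Σ δ_i`.
-/

namespace Polynomial

theorem coeff_prod_sum_of_natDegree_le {R ι : Type*} [CommSemiring R] (s : Finset ι)
    (f : ι → R[X]) (d : ι → ℕ) (h : ∀ i ∈ s, (f i).natDegree ≤ d i) :
    (∏ i ∈ s, f i).coeff (∑ i ∈ s, d i) = ∏ i ∈ s, (f i).coeff (d i) := by
  classical
  induction s using Finset.induction_on with
  | empty => simp
  | insert a s ha ih =>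
    rw [Finset.forall_mem_insert] at h
    rw [Finset.prod_insert ha, Finset.sum_insert ha, Finset.prod_insert ha,
      coeff_mul_add_eq_of_natDegree_le h.1
        ((natDegree_prod_le _ _).trans (Finset.sum_le_sum h.2)), ih h.2]

end Polynomial

namespace Matrix

theorem coeff_det_sum_of_natDegree_le {ι R : Type*} [Fintype ι] [DecidableEq ι] [CommRing R]
    (M : Matrix ι ι R[X]) (d : ι → ℕ) (h : ∀ i j, (M i j).natDegree ≤ d i) :
    M.det.coeff (∑ i, d i) = (Matrix.of fun i j => (M i j).coeff (d i)).det := by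
  simp only [det_apply, finsetSum_coeff, Units.smul_def, coeff_smul]
  refine Finset.sum_congr rfl fun σ _ => ?_
  rw [← Equiv.sum_comp σ d, coeff_prod_sum_of_natDegree_le _ _ _ fun i _ => h (σ i) i]
  rfl

end Matrix

namespace ConvCode

variable {F : Type} [Field F] {k n : ℕ}

def leadingRowCoeff (G : Matrix (Fin k) (Fin n) F[X]) : Matrix (Fin k) (Fin n) F :=
  Matrix.of fun i j => (G i j).coeff (rowDeg F G i)

theorem natDegree_le_rowDeg (G : Matrix (Fin k) (Fin n) F[X]) (i : Fin k) (j : Fin n) :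
    (G i j).natDegree ≤ rowDeg F G i :=
  Finset.le_sup (f := fun j => (G i j).natDegree) (Finset.mem_univ j)

theorem coeff_zero_vecMul (G : Matrix (Fin k) (Fin n) F[X]) (v : Fin k → F[X]) :
    (fun j => ((v ᵥ* G) j).coeff 0) = (fun i => (v i).coeff 0) ᵥ* matE F G := by
  funext j
  simp [vecMul, dotProduct, finsetSum_coeff, mul_coeff_zero, matE, ccfE]

theorem IsBasic.vecMul_matE_injective {G : Matrix (Fin k) (Fin n) F[X]} (hG : IsBasic F G) :
    Function.Injective (· ᵥ* matE F G) := by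
  obtain ⟨H, hH⟩ := hG
  have hE : matE F G * H.map constantCoeff = 1 := by
    have : matE F G = G.map constantCoeff := by ext; simp [matE, ccfE]
    rw [this, ← Matrix.map_mul, hH, Matrix.map_one _ (map_zero _) (map_one _)]
  refine Function.LeftInverse.injective (g := (· ᵥ* H.map constantCoeff)) fun b => ?_
  simp only [vecMul_vecMul, hE, vecMul_one]

theorem IsMinimalEncoder.eq_zero_of_vecMul_leadingRowCoeff_eq_zero
    {G : Matrix (Fin k) (Fin n) F[X]} (hG : IsMinimalEncoder F G) {b : Fin k → F}
    (hb : b ᵥ* leadingRowCoeff G = 0) : b = 0 := by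
  by_cases hδ : ∑ i, rowDeg F G i = 0
  -- `codeDeg = 0` yields no nonzero minor, but then `[G]_hr = G(0)`, which has a right inverse.
  · have hE : leadingRowCoeff G = matE F G := by
      ext i j
      simp [leadingRowCoeff, matE, ccfE, Finset.sum_eq_zero_iff.mp hδ i (Finset.mem_univ i)]
    exact hG.1.vecMul_matE_injective (by simpa [hE] using hb)
  · have hsup : codeDeg F G = ∑ i, rowDeg F G i := hG.2.symm
    have hne : (Finset.univ : Finset (Fin k ↪ Fin n)).Nonempty := by
      by_contra hempty
      rw [Finset.not_nonempty_iff_eq_empty] at hempty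
      simp only [codeDeg, hempty, Finset.sup_empty, bot_eq_zero'] at hsup
      exact hδ hsup.symm
    obtain ⟨f, -, hf⟩ := Finset.exists_mem_eq_sup _ hne
      fun f : Fin k ↪ Fin n => ((G.submatrix id f).det).natDegree
    have hdeg : ((G.submatrix id f).det).natDegree = ∑ i, rowDeg F G i := by
      rw [← hsup, codeDeg, hf]
    have hdet : ((leadingRowCoeff G).submatrix id f).det ≠ 0 := by
      rw [show (leadingRowCoeff G).submatrix id f
          = Matrix.of fun i j => ((G.submatrix id f) i j).coeff (rowDeg F G i) from rfl,
        ← coeff_det_sum_of_natDegree_le (G.submatrix id f) _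
          fun i j => natDegree_le_rowDeg G i (f j), ← hdeg]
      exact leadingCoeff_ne_zero.mpr (ne_zero_of_natDegree_gt (Nat.pos_of_ne_zero (hdeg ▸ hδ)))
    by_contra hb0
    refine hdet (exists_vecMul_eq_zero_iff.mp ⟨b, hb0, ?_⟩)
    funext j
    exact congrFun hb (f j)

theorem coeff_vecMul_eq_vecMul_leadingRowCoeff (G : Matrix (Fin k) (Fin n) F[X])
    (v : Fin k → F[X]) (M : ℕ)
    (hv : ∀ i, v i ≠ 0 → (v i).natDegree + rowDeg F G i ≤ M) :
    (fun j => ((v ᵥ* G) j).coeff M)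
      = (fun i => (v i).coeff (M - rowDeg F G i)) ᵥ* leadingRowCoeff G := by
  funext j
  simp only [vecMul, dotProduct, finsetSum_coeff, leadingRowCoeff, of_apply]
  refine Finset.sum_congr rfl fun i _ => ?_
  by_cases hvi : v i = 0
  · simp [hvi]
  · have hle := hv i hvi
    have hM : M = (M - rowDeg F G i) + rowDeg F G i := by omega
    conv_lhs => rw [hM]
    exact coeff_mul_add_eq_of_natDegree_le (by omega) (natDegree_le_rowDeg G i j)

/-- The nontrivial half of the predictable degree property. -/
theorem IsMinimalEncoder.natDegree_add_rowDeg_le {G : Matrix (Fin k) (Fin n) F[X]}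
    (hG : IsMinimalEncoder F G) (v : Fin k → F[X]) {i : Fin k} (hi : v i ≠ 0) :
    (v i).natDegree + rowDeg F G i ≤ Finset.univ.sup fun j => ((v ᵥ* G) j).natDegree := by
  set S := Finset.univ.filter fun i => v i ≠ 0
  have hiS : i ∈ S := Finset.mem_filter.mpr ⟨Finset.mem_univ i, hi⟩
  set M := S.sup fun i => (v i).natDegree + rowDeg F G i
  have hbound : ∀ i, v i ≠ 0 → (v i).natDegree + rowDeg F G i ≤ M := fun i hi =>
    Finset.le_sup (f := fun i => (v i).natDegree + rowDeg F G i)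
      (Finset.mem_filter.mpr ⟨Finset.mem_univ i, hi⟩)
  obtain ⟨i₀, hi₀S, hi₀⟩ := Finset.exists_mem_eq_sup S ⟨i, hiS⟩
    fun i => (v i).natDegree + rowDeg F G i
  have hvi₀ : v i₀ ≠ 0 := (Finset.mem_filter.mp hi₀S).2
  have hM : M = (v i₀).natDegree + rowDeg F G i₀ := hi₀
  have hlead : (fun i => (v i).coeff (M - rowDeg F G i)) ≠ 0 := by
    intro h
    have := congrFun h i₀
    rw [hM, Nat.add_sub_cancel] at this
    exact leadingCoeff_ne_zero.mpr hvi₀ this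
  obtain ⟨j, hj⟩ : ∃ j, ((v ᵥ* G) j).coeff M ≠ 0 := by
    by_contra! h
    refine hlead (hG.eq_zero_of_vecMul_leadingRowCoeff_eq_zero ?_)
    rw [← coeff_vecMul_eq_vecMul_leadingRowCoeff G v M hbound]
    exact funext h
  calc (v i).natDegree + rowDeg F G i ≤ M := hbound i hi
    _ ≤ ((v ᵥ* G) j).natDegree := le_natDegree_of_ne_zero hj
    _ ≤ _ := Finset.le_sup (f := fun j => ((v ᵥ* G) j).natDegree) (Finset.mem_univ j)

theorem IsMinimalEncoder.eq_zero_of_vecMul_eq_C {G : Matrix (Fin k) (Fin n) F[X]}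
    (hG : IsMinimalEncoder F G) {v : Fin k → F[X]} {w : Fin n → F}
    (hv : v ᵥ* G = fun j => C (w j)) {i : Fin k} (hi : 0 < rowDeg F G i) : v i = 0 := by
  by_contra hvi
  have := hG.natDegree_add_rowDeg_le v hvi
  simp only [hv, natDegree_C] at this
  rw [← bot_eq_zero, Finset.sup_bot, bot_eq_zero] at this
  omega

theorem IsMinimalEncoder.eq_zero_of_vecMul_matE_mem_constSet
    {G : Matrix (Fin k) (Fin n) F[X]} (hG : IsMinimalEncoder F G) {z : Fin k → F}
    (hz : z ᵥ* matE F G ∈ constSet F G) {i : Fin k} (hi : 0 < rowDeg F G i) : z i = 0 := by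
  obtain ⟨v, hv⟩ := hz
  have hv0 : (fun i => (v i).coeff 0) = z := by
    refine hG.1.vecMul_matE_injective ?_
    simp only [← coeff_zero_vecMul, hv, coeff_C_zero]
  rw [← congrFun hv0 i, hG.eq_zero_of_vecMul_eq_C hv hi, coeff_zero]

theorem sub_mem_constSet (G : Matrix (Fin k) (Fin n) F[X]) {w w' : Fin n → F}
    (hw : w ∈ constSet F G) (hw' : w' ∈ constSet F G) : w - w' ∈ constSet F G := by
  obtain ⟨v, hv⟩ := hw
  obtain ⟨v', hv'⟩ := hw'
  refine ⟨v - v', ?_⟩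
  simp only at hv hv' ⊢
  rw [sub_vecMul, hv, hv']
  funext j
  simp

theorem vecMul_ccfB_apply (d : Fin k → ℕ) (u : Fin k → F) (t : StateIdx k d) :
    (u ᵥ* ccfB F d) t = if (t.2 : ℕ) = 0 then u t.1 else 0 := by
  by_cases ht : (t.2 : ℕ) = 0 <;> simp [vecMul, dotProduct, ccfB, ht]

theorem vecMul_ccfB_transpose_apply (d : Fin k → ℕ) (Z : StateIdx k d → F) {i : Fin k}
    (hi : 0 < d i) : (Z ᵥ* (ccfB F d)ᵀ) i = Z ⟨i, ⟨0, hi⟩⟩ := by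
  rw [vecMul, dotProduct, Finset.sum_eq_single ⟨i, ⟨0, hi⟩⟩]
  · simp [ccfB]
  · rintro ⟨i', ν⟩ - hne
    have : ¬(i' = i ∧ (ν : ℕ) = 0) := by
      rintro ⟨rfl, hν⟩
      exact hne (Sigma.ext rfl (heq_of_eq (Fin.ext hν)))
    simp [ccfB, this]
  · simp

theorem ccfA_mul_ccfB_transpose (d : Fin k → ℕ) : ccfA F d * (ccfB F d)ᵀ = 0 := by
  ext s i
  refine Finset.sum_eq_zero fun t _ => ?_
  simp only [ccfA, ccfB, transpose_apply, of_apply]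
  split_ifs with hst hti
  · have := hst.2
    have := hti.2
    omega
  all_goals simp

theorem vecMul_ccfB_transpose_vecMul_ccfB (d : Fin k → ℕ) (u : Fin k → F) :
    ((u ᵥ* ccfB F d) ᵥ* (ccfB F d)ᵀ) ᵥ* ccfB F d = u ᵥ* ccfB F d := by
  funext t
  rw [vecMul_ccfB_apply, vecMul_ccfB_apply]
  split_ifs
  · rw [vecMul_ccfB_transpose_apply _ _ t.2.pos, vecMul_ccfB_apply]
    simp
  · rfl

theorem snd_eq_of_mem_Delta (G : Matrix (Fin k) (Fin n) F[X])
    {p : (States F G → F) × (States F G → F)} (hp : p ∈ Delta F G) :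
    p.2 = p.1 ᵥ* matA F G + (p.2 ᵥ* (matB F G)ᵀ) ᵥ* matB F G := by
  obtain ⟨u, hu⟩ := hp
  conv_rhs => rw [hu]
  rw [add_vecMul, add_vecMul, vecMul_vecMul p.1, matA, matB, ccfA_mul_ccfB_transpose,
    vecMul_zero, zero_vecMul, zero_add, vecMul_ccfB_transpose_vecMul_ccfB, ← matA, ← matB,
    ← hu]

theorem IsMinimalEncoder.vecMul_matB_eq_zero_of_vecMul_matE_mem_constSet
    {G : Matrix (Fin k) (Fin n) F[X]} (hG : IsMinimalEncoder F G) {z : Fin k → F}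
    (hz : z ᵥ* matE F G ∈ constSet F G) : z ᵥ* matB F G = 0 := by
  funext t
  rw [matB, vecMul_ccfB_apply, hG.eq_zero_of_vecMul_matE_mem_constSet hz t.2.pos, ite_self]
  rfl

end ConvCode

theorem statement9_general {F : Type} [Field F]
    (k n : ℕ) (G : Matrix (Fin k) (Fin n) (Polynomial F))
    (hG : ConvCode.IsMinimalEncoder F G) :
    Set.InjOn Prod.fst (ConvCode.Omega F G) := by
  rintro p ⟨hpΔ, hpC⟩ q ⟨hqΔ, hqC⟩ (hX : p.1 = q.1)
  have hW : p.2 - q.2 = ((p.2 - q.2) ᵥ* (ConvCode.matB F G)ᵀ) ᵥ* ConvCode.matB F G := by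
    conv_lhs => rw [ConvCode.snd_eq_of_mem_Delta G hpΔ, ConvCode.snd_eq_of_mem_Delta G hqΔ, hX]
    rw [sub_vecMul, sub_vecMul]
    abel
  have hconst :
      ((p.2 - q.2) ᵥ* (ConvCode.matB F G)ᵀ) ᵥ* ConvCode.matE F G ∈ ConvCode.constSet F G := by
    convert ConvCode.sub_mem_constSet G hpC hqC using 1
    rw [hX, sub_vecMul, sub_vecMul]
    abel
  rw [hG.vecMul_matB_eq_zero_of_vecMul_matE_mem_constSet hconst] at hW
  exact Prod.ext hX (sub_eq_zero.mp hW)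

/-- Proposition 4.5(a): the projection onto the first component is injective on `Ω`. -/
theorem statement9 {F : Type} [Field F] [Fintype F]
    (k n : ℕ) (G : Matrix (Fin k) (Fin n) (Polynomial F))
    (hG : ConvCode.IsMinimalEncoder F G) :
    Set.InjOn Prod.fst (ConvCode.Omega F G) :=
  statement9_general k n G hG
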